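/- There exists a constant K > 0, depending only on a, b, C and q₀, such that q(τ) ≤ K for all τ ≥ 0 (i.e. q is globally bounded). -/

import Mathlib

open Real Set Filter intervalIntegral

/-!
With `ε = min a 1` and `Q τ = 1 + ∫₀^τ q`, the hypothesis gives
`(q + ε Q)' = q' + ε q ≤ (C/ε) e^{-bτ} (q + ε Q)`: the term `-a q` absorbs `ε q`, and `ε ≤ 1`
lets `C e^{-bτ} q` be bounded by `(C/ε) e^{-bτ} q`.
The coefficient `(C/ε) e^{-bτ}` has total integral `C/(ε b)`, so Grönwall's inequality bounds
`q ≤ q + ε Q` by `(q₀ + ε) exp (C/(ε b))`.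
-/

section Primitive

variable {f : ℝ → ℝ} {t₀ : ℝ}

theorem continuousOn_primitive_Ici (hf : ContinuousOn f (Ici t₀)) :
    ContinuousOn (fun t => ∫ s in t₀..t, f s) (Ici t₀) := by
  intro t ht
  have hIcc : ContinuousOn (fun t => ∫ s in t₀..t, f s) (Icc t₀ (t + 1)) := by
    have hint : IntervalIntegrable f MeasureTheory.volume t₀ (t + 1) :=
      (hf.mono Icc_subset_Ici_self).intervalIntegrable_of_Icc (by linarith [mem_Ici.1 ht])
    simpa [uIcc_of_le (by linarith [mem_Ici.1 ht] : t₀ ≤ t + 1)] using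
      continuousOn_primitive_interval' hint left_mem_uIcc
  refine (hIcc t ⟨ht, by linarith⟩).mono_of_mem_nhdsWithin ?_
  rw [← Ici_inter_Iic]
  exact inter_mem_nhdsWithin _ (Iic_mem_nhds (by linarith))

theorem hasDerivAt_primitive_of_continuousOn_Ici (hf : ContinuousOn f (Ici t₀)) {t : ℝ}
    (ht : t₀ < t) : HasDerivAt (fun t => ∫ s in t₀..t, f s) (f t) t :=
  integral_hasDerivAt_right ((hf.mono Icc_subset_Ici_self).intervalIntegrable_of_Icc ht.le)
    ((hf.mono (Ioi_subset_Ici le_rfl)).stronglyMeasurableAtFilter isOpen_Ioi t ht)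
    (hf.continuousAt (Ici_mem_nhds ht))

end Primitive

theorem le_mul_exp_sub_of_hasDerivAt_le_mul {v v' G k : ℝ → ℝ} {t₀ : ℝ}
    (hv : ContinuousOn v (Ici t₀)) (hv' : ∀ t > t₀, HasDerivAt v (v' t) t)
    (hGc : ContinuousOn G (Ici t₀)) (hG : ∀ t > t₀, HasDerivAt G (k t) t)
    (hle : ∀ t > t₀, v' t ≤ k t * v t) {t : ℝ} (ht : t₀ ≤ t) :
    v t ≤ v t₀ * exp (G t - G t₀) := by
  have hanti : AntitoneOn (fun t => v t * exp (-G t)) (Ici t₀) := by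
    refine antitoneOn_of_hasDerivWithinAt_nonpos (convex_Ici t₀)
      (hv.mul (continuous_exp.comp_continuousOn hGc.neg))
      (f' := fun t => (v' t - k t * v t) * exp (-G t)) ?_ ?_
    · rw [interior_Ici]
      intro t ht
      exact (((hv' t ht).mul (hG t ht).neg.exp).congr_deriv
        (by simp only [Pi.neg_apply]; ring)).hasDerivWithinAt
    · rw [interior_Ici]
      intro t ht
      exact mul_nonpos_of_nonpos_of_nonneg (by linarith [hle t ht]) (exp_pos _).le
  have h := hanti self_mem_Ici ht ht
  calc v t = v t * exp (-G t) * exp (G t) := by rw [mul_assoc, ← exp_add]; simp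
    _ ≤ v t₀ * exp (-G t₀) * exp (G t) := mul_le_mul_of_nonneg_right h (exp_pos _).le
    _ = v t₀ * exp (G t - G t₀) := by rw [mul_assoc, ← exp_add]; ring_nf

theorem le_mul_exp_div_of_hasDerivAt_le_exp_mul {v v' : ℝ → ℝ} {c b : ℝ} (hc : 0 ≤ c)
    (hb : 0 < b) (hv : ContinuousOn v (Ici 0)) (hv' : ∀ t > 0, HasDerivAt v (v' t) t)
    (hle : ∀ t > 0, v' t ≤ c * exp (-b * t) * v t) (hv0 : 0 ≤ v 0) {t : ℝ} (ht : 0 ≤ t) :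
    v t ≤ v 0 * exp (c / b) := by
  have hG : ∀ t, HasDerivAt (fun t => -(c / b) * exp (-b * t)) (c * exp (-b * t)) t := fun t =>
    (((hasDerivAt_id t).const_mul (-b)).exp.const_mul (-(c / b))).congr_deriv
      (by field_simp; rfl)
  refine (le_mul_exp_sub_of_hasDerivAt_le_mul hv hv'
    (fun t _ => (hG t).continuousAt.continuousWithinAt) (fun t _ => hG t) hle ht).trans ?_
  gcongr
  have : 0 ≤ c / b * exp (-b * t) := by positivity
  simp only [mul_zero, exp_zero]
  linarith

theorem stmt_11_general
    (a b C q₀ : ℝ) (ha : 0 < a) (hb : 0 < b) (hC : 0 < C) (hq₀ : 0 < q₀)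
    (q q' : ℝ → ℝ) (hq0 : q 0 = q₀)
    (hqc : ContinuousOn q (Set.Ici 0))
    (hderiv : ∀ τ > (0:ℝ), HasDerivAt q (q' τ) τ)
    (hqpos : ∀ τ ≥ (0:ℝ), 0 < q τ)
    (hineq : ∀ τ > (0:ℝ), q' τ + (a - C * Real.exp (-b * τ)) * q τ ≤
      C * Real.exp (-b * τ) * (1 + ∫ σ in (0:ℝ)..τ, q σ))
    :
    ∃ K > (0:ℝ), ∀ τ ≥ (0:ℝ), q τ ≤ K := by
  set ε := min a 1
  have hε : 0 < ε := lt_min ha one_pos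
  set Q : ℝ → ℝ := fun τ => 1 + ∫ σ in (0:ℝ)..τ, q σ
  have hQ : ∀ τ ≥ (0:ℝ), 1 ≤ Q τ := fun τ hτ => le_add_of_nonneg_right <|
    integral_nonneg hτ fun σ hσ => (hqpos σ hσ.1).le
  have hv : ContinuousOn (fun τ => q τ + ε * Q τ) (Ici 0) :=
    hqc.add (continuousOn_const.mul (continuousOn_const.add (continuousOn_primitive_Ici hqc)))
  have hv' : ∀ τ > (0:ℝ), HasDerivAt (fun τ => q τ + ε * Q τ) (q' τ + ε * q τ) τ := fun τ hτ =>
    (hderiv τ hτ).add (((hasDerivAt_primitive_of_continuousOn_Ici hqc hτ).const_add 1).const_mul ε)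
  have hle : ∀ τ > (0:ℝ), q' τ + ε * q τ ≤ C / ε * exp (-b * τ) * (q τ + ε * Q τ) := by
    intro τ hτ
    have hq : 0 ≤ q τ := (hqpos τ hτ.le).le
    have hCε : C ≤ C / ε := le_div_self hC.le hε (min_le_right a 1)
    calc q' τ + ε * q τ ≤ q' τ + a * q τ := by gcongr; exact min_le_left a 1
      _ ≤ C * exp (-b * τ) * q τ + C * exp (-b * τ) * Q τ := by linarith [hineq τ hτ]
      _ ≤ C / ε * exp (-b * τ) * q τ + C * exp (-b * τ) * Q τ := by gcongr
      _ = C / ε * exp (-b * τ) * (q τ + ε * Q τ) := by field_simp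
  refine ⟨(q₀ + ε) * exp (C / ε / b), by positivity, fun τ hτ => ?_⟩
  have hbound := le_mul_exp_div_of_hasDerivAt_le_exp_mul (by positivity) hb hv hv' hle
    (add_pos (hqpos 0 le_rfl) (mul_pos hε (one_pos.trans_le (hQ 0 le_rfl)))).le hτ
  simp only [hq0, Q, integral_same, add_zero, mul_one] at hbound
  exact hbound.trans' (le_add_of_nonneg_right (mul_nonneg hε.le (zero_le_one.trans (hQ τ hτ))))

theorem stmt_11
    (a b C q₀ : ℝ) (ha : 0 < a) (hb : 0 < b) (hC : 0 < C) (hq₀ : 0 < q₀)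
    (q q' : ℝ → ℝ) (hq0 : q 0 = q₀)
    (hqc : ContinuousOn q (Set.Ici 0))
    (hq'c : ContinuousOn q' (Set.Ici 0))
    (hderiv : ∀ τ > (0:ℝ), HasDerivAt q (q' τ) τ)
    (hqpos : ∀ τ ≥ (0:ℝ), 0 < q τ)
    (hineq : ∀ τ > (0:ℝ), q' τ + (a - C * Real.exp (-b * τ)) * q τ ≤
      C * Real.exp (-b * τ) * (1 + ∫ σ in (0:ℝ)..τ, q σ))
    :
    ∃ K > (0:ℝ), ∀ τ ≥ (0:ℝ), q τ ≤ K :=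
  stmt_11_general a b C q₀ ha hb hC hq₀ q q' hq0 hqc hderiv hqpos hineq
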